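/- arXiv:2404.02239 — 4 statements merged into one kernel-verified Lean document; each statement's English description precedes it below -/
import Mathlib

section
/- Let φ(t) = |t|^p for t ∈ ℝ with p ∈ [1,2], so that φ'(t) = p · sign(t) · |t|^(p-1). Then for all u, v ∈ ℝ, |φ'(u) - φ'(v)| ≤ p · 2^(2-p) · |u - v|^(p-1). -/
/-!
With `g t = sign t * |t| ^ q` and `q = p - 1 ∈ [0, 1]`, the claim is `p` times the `q`-Hölder
bound `|g u - g v| ≤ 2 ^ (1 - q) * |u - v| ^ q`. By symmetry take `v ≤ u`. If `u, v` have the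
same sign (reduced to `0 ≤ v` by oddness of `g`), subadditivity of `t ↦ t ^ q` gives
`|g u - g v| ≤ |u - v| ^ q`. If `v < 0 < u`, then `g u - g v = u ^ q + (-v) ^ q`, and concavity
of `t ↦ t ^ q` at the midpoint bounds this by `2 ^ (1 - q) * (u - v) ^ q`; this is the case that
produces the constant.
-/

open Real

noncomputable def signedRpow (q t : ℝ) : ℝ := Real.sign t * |t| ^ q

section signedRpow

variable {q t : ℝ}

lemma signedRpow_neg (q t : ℝ) : signedRpow q (-t) = -signedRpow q t := by
  simp only [signedRpow, Real.sign_neg, abs_neg, neg_mul]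

lemma signedRpow_of_pos (ht : 0 < t) : signedRpow q t = t ^ q := by
  rw [signedRpow, Real.sign_of_pos ht, abs_of_pos ht, one_mul]

lemma abs_signedRpow_le (q t : ℝ) : |signedRpow q t| ≤ |t| ^ q := by
  rw [signedRpow, abs_mul, abs_of_nonneg (rpow_nonneg (abs_nonneg t) q)]
  have abs_sign_le : |Real.sign t| ≤ 1 := by
    rcases Real.sign_apply_eq t with h | h | h <;> simp [h]
  exact mul_le_of_le_one_left (rpow_nonneg (abs_nonneg t) q) abs_sign_le

end signedRpow

section rpow

variable {q a b : ℝ}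

lemma rpow_sub_rpow_le_rpow_sub (hq₀ : 0 ≤ q) (hq₁ : q ≤ 1) (hb : 0 ≤ b) (hba : b ≤ a) :
    a ^ q - b ^ q ≤ (a - b) ^ q := by
  have h := rpow_add_le_add_rpow (sub_nonneg.2 hba) hb hq₀ hq₁
  rw [sub_add_cancel] at h
  linarith

lemma rpow_add_rpow_le_two_rpow_mul (hq₀ : 0 ≤ q) (hq₁ : q ≤ 1) (ha : 0 ≤ a) (hb : 0 ≤ b) :
    a ^ q + b ^ q ≤ 2 ^ (1 - q) * (a + b) ^ q := by
  have hmid := (concaveOn_rpow hq₀ hq₁).2 (Set.mem_Ici.2 ha) (Set.mem_Ici.2 hb)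
    (by norm_num : (0 : ℝ) ≤ 1 / 2) (by norm_num : (0 : ℝ) ≤ 1 / 2) (by norm_num)
  simp only [smul_eq_mul] at hmid
  rw [show 1 / 2 * a + 1 / 2 * b = (a + b) / 2 by ring,
    div_rpow (add_nonneg ha hb) zero_le_two] at hmid
  have h2q : (0 : ℝ) < 2 ^ q := rpow_pos_of_pos two_pos q
  calc a ^ q + b ^ q ≤ 2 * ((a + b) ^ q / 2 ^ q) := by linarith
    _ = 2 ^ (1 - q) * (a + b) ^ q := by
      rw [rpow_sub two_pos, rpow_one]
      ring

end rpow

section holder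

variable {q u v : ℝ}

lemma abs_signedRpow_sub_le_of_nonneg (hq₀ : 0 ≤ q) (hq₁ : q ≤ 1) (hv : 0 ≤ v) (hvu : v ≤ u) :
    |signedRpow q u - signedRpow q v| ≤ (u - v) ^ q := by
  rcases hv.eq_or_lt with rfl | hv
  -- `signedRpow q 0 = 0` even for `q = 0`, where `0 ^ q = 1`, so this case is not `u ^ q - 0 ^ q`.
  · rw [show signedRpow q 0 = 0 by simp [signedRpow], sub_zero, sub_zero]
    exact (abs_signedRpow_le q u).trans_eq (by rw [abs_of_nonneg hvu])
  have hu := hv.trans_le hvu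
  rw [signedRpow_of_pos hu, signedRpow_of_pos hv,
    abs_of_nonneg (sub_nonneg.2 (rpow_le_rpow hv.le hvu hq₀))]
  exact rpow_sub_rpow_le_rpow_sub hq₀ hq₁ hv.le hvu

lemma abs_signedRpow_sub_le_of_neg_of_pos (hq₀ : 0 ≤ q) (hq₁ : q ≤ 1) (hv : v < 0) (hu : 0 < u) :
    |signedRpow q u - signedRpow q v| ≤ 2 ^ (1 - q) * (u - v) ^ q := by
  have hv' : 0 < -v := neg_pos.2 hv
  have hg : signedRpow q u - signedRpow q v = u ^ q + (-v) ^ q := by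
    rw [← neg_neg v, signedRpow_neg, signedRpow_of_pos hu, signedRpow_of_pos hv', neg_neg,
      sub_neg_eq_add]
  rw [hg, abs_of_nonneg (by positivity), sub_eq_add_neg]
  exact rpow_add_rpow_le_two_rpow_mul hq₀ hq₁ hu.le hv'.le

theorem abs_signedRpow_sub_le (hq₀ : 0 ≤ q) (hq₁ : q ≤ 1) (u v : ℝ) :
    |signedRpow q u - signedRpow q v| ≤ 2 ^ (1 - q) * |u - v| ^ q := by
  wlog hvu : v ≤ u generalizing u v
  · rw [abs_sub_comm, abs_sub_comm u]
    exact this v u (le_of_not_ge hvu)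
  have one_le : (1 : ℝ) ≤ 2 ^ (1 - q) := one_le_rpow one_le_two (by linarith)
  have hpow_nonneg : 0 ≤ (u - v) ^ q := rpow_nonneg (sub_nonneg.2 hvu) q
  rw [abs_of_nonneg (sub_nonneg.2 hvu)]
  rcases le_or_gt 0 v with hv | hv
  · exact (abs_signedRpow_sub_le_of_nonneg hq₀ hq₁ hv hvu).trans
      (le_mul_of_one_le_left hpow_nonneg one_le)
  rcases le_or_gt u 0 with hu | hu
  · have h := abs_signedRpow_sub_le_of_nonneg hq₀ hq₁ (neg_nonneg.2 hu) (neg_le_neg hvu)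
    rw [signedRpow_neg, signedRpow_neg, neg_sub_neg, neg_sub_neg] at h
    exact h.trans (le_mul_of_one_le_left hpow_nonneg one_le)
  · exact abs_signedRpow_sub_le_of_neg_of_pos hq₀ hq₁ hv hu

end holder

theorem lp_derivative_holder
    (p : ℝ) (hp : p ∈ Set.Icc (1:ℝ) 2) (u v : ℝ) :
    |p * Real.sign u * |u| ^ (p - 1) - p * Real.sign v * |v| ^ (p - 1)| ≤
      p * 2 ^ (2 - p) * |u - v| ^ (p - 1) := by
  obtain ⟨hp₁, hp₂⟩ := hp
  have hp₀ : 0 ≤ p := by linarith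
  have h := abs_signedRpow_sub_le (q := p - 1) (by linarith) (by linarith) u v
  rw [show 1 - (p - 1) = 2 - p by ring] at h
  simp only [mul_assoc, ← mul_sub, abs_mul, abs_of_nonneg hp₀]
  exact mul_le_mul_of_nonneg_left h hp₀
end

section
/- For all s ∈ (0,1) and t > 0, the Gamma function satisfies t^(1-s) ≤ Γ(t+1)/Γ(t+s) ≤ (t+s)^(1-s). -/
/-!
Log-convexity of `Γ` between `x` and `x + 1`, together with `Γ (x + 1) = x Γ x`, gives
`Γ (x + s) ≤ x ^ s Γ x` for `0 < s < 1`. At `x = t` this is the lower bound; at `x = t + s`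
with exponent `1 - s` it is the upper bound.
-/

open Real

theorem Real.Gamma_add_le_rpow_mul_Gamma {x s : ℝ} (hx : 0 < x) (hs0 : 0 < s) (hs1 : s < 1) :
    Gamma (x + s) ≤ x ^ s * Gamma x := by
  have hΓx : 0 < Gamma x := Gamma_pos_of_pos hx
  calc Gamma (x + s) = Gamma ((1 - s) * x + s * (x + 1)) := by ring_nf
    _ ≤ Gamma x ^ (1 - s) * Gamma (x + 1) ^ s :=
      Gamma_mul_add_mul_le_rpow_Gamma_mul_rpow_Gamma hx (by linarith) (by linarith) hs0 (by ring)
    _ = x ^ s * (Gamma x ^ (1 - s) * Gamma x ^ s) := by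
      rw [Gamma_add_one hx.ne', mul_rpow hx.le hΓx.le]; ring
    _ = x ^ s * Gamma x := by rw [← rpow_add hΓx]; norm_num

theorem wendel_double_inequality
    (s t : ℝ) (hs : s ∈ Set.Ioo (0:ℝ) 1) (ht : 0 < t) :
    t ^ (1 - s) ≤ Real.Gamma (t + 1) / Real.Gamma (t + s) ∧
      Real.Gamma (t + 1) / Real.Gamma (t + s) ≤ (t + s) ^ (1 - s) := by
  obtain ⟨hs0, hs1⟩ := hs
  have hts : 0 < t + s := by linarith
  have hΓts : 0 < Gamma (t + s) := Gamma_pos_of_pos hts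
  constructor
  · rw [le_div_iff₀ hΓts, Gamma_add_one ht.ne']
    calc t ^ (1 - s) * Gamma (t + s) ≤ t ^ (1 - s) * (t ^ s * Gamma t) := by
          gcongr; exact Gamma_add_le_rpow_mul_Gamma ht hs0 hs1
      _ = t * Gamma t := by rw [← mul_assoc, ← rpow_add ht]; norm_num
  · rw [div_le_iff₀ hΓts]
    simpa only [add_add_sub_cancel] using
      Gamma_add_le_rpow_mul_Gamma hts (sub_pos.2 hs1) (sub_lt_self 1 hs0)
end

section
/- Let α ∈ [0,1], η > 0, a ≥ 0, and d ≥ 1. If 2a·(ηd)^((α+1)/2) ≤ 1, then ∫_{ℝ^d} exp(-‖x‖²/(2η) - a‖x‖^(α+1)) dx ≥ (2πη)^(d/2) / 2. -/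
/-!
Write `p = α + 1 = 2θ` with `θ ≤ 1`. By concavity of `t ↦ t ^ θ`, its tangent line at
`t = η d` (the mean of `‖x‖²` under the Gaussian) bounds `a ‖x‖ ^ p = a (‖x‖²) ^ θ` by a
quadratic in `‖x‖`, so the integrand dominates a slightly narrower Gaussian times a constant.
Computing that Gaussian integral, with `κ = a (η d) ^ θ`, gives the lower bound
`exp (-κ) (2πη) ^ (d / 2)`, and the hypothesis says `κ ≤ 1 / 2`, while `exp (-1 / 2) ≥ 1 / 2`.
-/

open MeasureTheory Real

theorem rpow_le_rpow_mul_one_add_mul_div_sub_one {t s θ : ℝ} (ht : 0 ≤ t) (hs : 0 < s)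
    (hθ₀ : 0 ≤ θ) (hθ₁ : θ ≤ 1) : t ^ θ ≤ s ^ θ * (1 + θ * (t / s - 1)) := by
  have hts : -1 ≤ t / s - 1 := by linarith [div_nonneg ht hs.le]
  calc t ^ θ = s ^ θ * (1 + (t / s - 1)) ^ θ := by
        rw [add_sub_cancel, div_rpow ht hs.le, mul_div_cancel₀ _ (rpow_pos_of_pos hs θ).ne']
    _ ≤ s ^ θ * (1 + θ * (t / s - 1)) := by
        gcongr; exact rpow_one_add_le_one_add_mul_self hts hθ₀ hθ₁

theorem one_add_div_rpow_le_exp {u p : ℝ} (hu : 0 ≤ u) (hp : 0 < p) :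
    (1 + u / p) ^ p ≤ exp u := by
  calc (1 + u / p) ^ p ≤ exp (u / p) ^ p := by
        gcongr; linarith [add_one_le_exp (u / p)]
    _ = exp u := by rw [← exp_mul, div_mul_cancel₀ _ hp.ne']

section Gaussian

variable {V : Type*} [NormedAddCommGroup V] [InnerProductSpace ℝ V] [FiniteDimensional ℝ V]
  [MeasurableSpace V] [BorelSpace V]

theorem integrable_rexp_neg_mul_sq_norm {b : ℝ} (hb : 0 < b) :
    Integrable (fun v : V ↦ exp (-b * ‖v‖ ^ 2)) :=
  Integrable.of_integral_ne_zero <| by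
    rw [GaussianFourier.integral_rexp_neg_mul_sq_norm hb]; positivity

theorem exp_neg_mul_rpow_le_integral_of_le {f : V → ℝ} {b c : ℝ} (hb : 0 < b)
    (hf : Integrable f) (h : ∀ v, exp (-b * ‖v‖ ^ 2 - c) ≤ f v) :
    exp (-c) * (π / b) ^ (Module.finrank ℝ V / 2 : ℝ) ≤ ∫ v, f v := by
  rw [← GaussianFourier.integral_rexp_neg_mul_sq_norm hb, ← integral_const_mul]
  refine integral_mono ((integrable_rexp_neg_mul_sq_norm hb).const_mul _) hf fun v ↦ ?_
  simpa only [← exp_add, neg_add_eq_sub, add_comm] using h v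

theorem integrable_exp_neg_sq_norm_div_sub_mul_rpow {η a : ℝ} (hη : 0 < η) (ha : 0 ≤ a)
    (p : ℝ) : Integrable (fun v : V ↦ exp (-‖v‖ ^ 2 / (2 * η) - a * ‖v‖ ^ p)) := by
  refine (integrable_rexp_neg_mul_sq_norm (V := V) (b := 1 / (2 * η)) (by positivity)).mono'
    (by fun_prop) (ae_of_all _ fun v ↦ ?_)
  rw [norm_of_nonneg (exp_pos _).le, exp_le_exp]
  have : 0 ≤ a * ‖v‖ ^ p := by positivity
  linarith [show -‖v‖ ^ 2 / (2 * η) = -(1 / (2 * η)) * ‖v‖ ^ 2 by ring]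

theorem exp_neg_mul_rpow_mul_rpow_le_integral {η a p : ℝ} (hη : 0 < η) (ha : 0 ≤ a)
    (hp₀ : 0 ≤ p) (hp₂ : p ≤ 2) (hV : 0 < Module.finrank ℝ V) :
    exp (-(a * (η * Module.finrank ℝ V) ^ (p / 2))) *
        (2 * π * η) ^ (Module.finrank ℝ V / 2 : ℝ) ≤
      ∫ v : V, exp (-‖v‖ ^ 2 / (2 * η) - a * ‖v‖ ^ p) := by
  set n : ℝ := (Module.finrank ℝ V : ℝ)
  set θ := p / 2
  set κ := a * (η * n) ^ θ
  have hn : 0 < n := by simp only [n]; exact_mod_cast hV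
  have hθ₀ : 0 ≤ θ := by positivity
  have hθ₁ : θ ≤ 1 := by simp only [θ]; linarith
  set b := (1 + θ * κ / (n / 2)) / (2 * η)
  have hb : 0 < b := by positivity
  have hminorant : ∀ v : V,
      exp (-b * ‖v‖ ^ 2 - (1 - θ) * κ) ≤ exp (-‖v‖ ^ 2 / (2 * η) - a * ‖v‖ ^ p) := by
    intro v
    have hpow : ‖v‖ ^ p = (‖v‖ ^ 2) ^ θ := by
      rw [← rpow_natCast, ← rpow_mul (norm_nonneg v)]; simp only [θ]; push_cast; ring_nf
    have htangent : a * ‖v‖ ^ p ≤ κ * (1 + θ * (‖v‖ ^ 2 / (η * n) - 1)) := by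
      rw [hpow, mul_assoc]
      gcongr
      exact rpow_le_rpow_mul_one_add_mul_div_sub_one (by positivity) (by positivity) hθ₀ hθ₁
    have hb_eq : b * ‖v‖ ^ 2 = ‖v‖ ^ 2 / (2 * η) + κ * θ * (‖v‖ ^ 2 / (η * n)) := by
      simp only [b]; field_simp
    rw [exp_le_exp]
    have hexpand : κ * (1 + θ * (‖v‖ ^ 2 / (η * n) - 1)) =
        κ * θ * (‖v‖ ^ 2 / (η * n)) + (1 - θ) * κ := by ring
    linarith [neg_div (2 * η) (‖v‖ ^ 2), neg_mul b (‖v‖ ^ 2)]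
  calc exp (-κ) * (2 * π * η) ^ (n / 2)
      = exp (-((1 - θ) * κ)) * ((2 * π * η) ^ (n / 2) / exp (θ * κ)) := by
        rw [mul_div_left_comm, ← exp_sub, mul_comm]; ring_nf
    _ ≤ exp (-((1 - θ) * κ)) * ((2 * π * η) ^ (n / 2) / (1 + θ * κ / (n / 2)) ^ (n / 2)) := by
        gcongr
        exact one_add_div_rpow_le_exp (by positivity) (by positivity)
    _ = exp (-((1 - θ) * κ)) * (π / b) ^ (n / 2) := by
        rw [← div_rpow (by positivity) (by positivity)]
        congr 2
        simp only [b]; field_simp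
    _ ≤ _ := exp_neg_mul_rpow_le_integral_of_le hb
        (integrable_exp_neg_sq_norm_div_sub_mul_rpow hη ha p) hminorant

end Gaussian

theorem modified_gaussian_integral_lower_bound
    (α η a : ℝ) (d : ℕ) (hα : α ∈ Set.Icc (0:ℝ) 1) (hη : 0 < η) (ha : 0 ≤ a)
    (hd : 1 ≤ d) (hcond : 2 * a * (η * d) ^ ((α + 1) / 2) ≤ 1) :
    (2 * Real.pi * η) ^ ((d : ℝ) / 2) / 2 ≤
      ∫ x : EuclideanSpace ℝ (Fin d),
        Real.exp (-‖x‖ ^ 2 / (2 * η) - a * ‖x‖ ^ (α + 1)) := by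
  obtain ⟨hα₀, hα₁⟩ := hα
  have hbound := exp_neg_mul_rpow_mul_rpow_le_integral (V := EuclideanSpace ℝ (Fin d)) hη ha
    (p := α + 1) (by linarith) (by linarith) (by rw [finrank_euclideanSpace_fin]; exact hd)
  rw [finrank_euclideanSpace_fin] at hbound
  refine le_trans ?_ hbound
  rw [div_eq_inv_mul]
  gcongr
  linarith [add_one_le_exp (-(a * (η * d) ^ ((α + 1) / 2)))]
end

section
/- Let f : ℝ^d → ℝ be convex with gradient satisfying ‖f'(u) - f'(v)‖ ≤ L_α‖u - v‖^α, let η > 0, y ∈ ℝ^d, f_y^η(x) = f(x) + ‖x - y‖²/(2η), and let x* minimize f_y^η. Then for all x ∈ ℝ^d, f_y^η(x) ≤ f_y^η(x*) + ‖x - x*‖²/(2η) + (L_α/(α+1))‖x - x*‖^(α+1). -/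
/-!
At the minimiser the gradient of `f + ‖· - y‖² / (2η)` vanishes, i.e. `f' x⋆ = -(x⋆ - y) / η`.
Expanding `‖x - y‖² = ‖x⋆ - y‖² + 2⟪x⋆ - y, x - x⋆⟫ + ‖x - x⋆‖²`, the cross term cancels against
`⟪f' x⋆, x - x⋆⟫`, and the claim reduces to the descent inequality
`f x ≤ f x⋆ + ⟪f' x⋆, x - x⋆⟫ + L / (α + 1) ‖x - x⋆‖^(α + 1)` for an `α`-Hölder gradient.
-/

open InnerProductSpace Set
open scoped RealInnerProductSpace

variable {F : Type*} [NormedAddCommGroup F] [InnerProductSpace ℝ F] [CompleteSpace F]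

theorem HasGradientAt.hasDerivAt_comp_add_smul {f : F → ℝ} {g x v : F} {t : ℝ}
    (h : HasGradientAt f g (x + t • v)) :
    HasDerivAt (fun s : ℝ => f (x + s • v)) ⟪g, v⟫_ℝ t := by
  have hline : HasDerivAt (fun s : ℝ => x + s • v) v t := by
    simpa using ((hasDerivAt_id t).smul_const v).const_add x
  simpa [Function.comp_def] using h.hasFDerivAt.comp_hasDerivAt t hline

theorem HasGradientAt.add {f g : F → ℝ} {f' g' x : F} (hf : HasGradientAt f f' x)
    (hg : HasGradientAt g g' x) : HasGradientAt (fun z => f z + g z) (f' + g') x := by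
  rw [hasGradientAt_iff_hasFDerivAt, map_add]
  exact hf.hasFDerivAt.add hg.hasFDerivAt

theorem IsLocalMin.hasGradientAt_eq_zero {f : F → ℝ} {g x : F}
    (hmin : IsLocalMin f x) (h : HasGradientAt f g x) : g = 0 :=
  (toDual ℝ F).map_eq_zero_iff.mp (hmin.hasFDerivAt_eq_zero h.hasFDerivAt)

theorem hasGradientAt_norm_sub_sq_div_two_mul (y x : F) (η : ℝ) :
    HasGradientAt (fun z => ‖z - y‖ ^ 2 / (2 * η)) (η⁻¹ • (x - y)) x := by
  have h := ((hasFDerivAt_id x).sub_const y).norm_sq.const_mul (2 * η)⁻¹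
  rw [hasGradientAt_iff_hasFDerivAt]
  refine (h.congr_fderiv ?_).congr_of_eventuallyEq (.of_forall fun z => ?_)
  · ext w
    simp only [id_eq, map_sub, ContinuousLinearMap.comp_id, smul_apply, sub_apply,
      coe_innerSL_apply, nsmul_eq_mul, smul_eq_mul, map_smul, toDual_apply_apply]
    ring
  · simp only [id]
    ring

theorem descent_lemma_of_holder_gradient {f : F → ℝ} {f' : F → F} {α L : ℝ} (hα : 0 ≤ α)
    (hdiff : ∀ x, HasGradientAt f (f' x) x)
    (hHolder : ∀ u v, ‖f' u - f' v‖ ≤ L * ‖u - v‖ ^ α) (x₀ x : F) :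
    f x ≤ f x₀ + ⟪f' x₀, x - x₀⟫_ℝ + L / (α + 1) * ‖x - x₀‖ ^ (α + 1) := by
  set v := x - x₀
  have hα1 : α + 1 ≠ 0 := by positivity
  -- `φ 1 ≤ φ 0` is the claim; `φ` decreases on `[0, ∞)` by Cauchy–Schwarz and the Hölder bound.
  set φ : ℝ → ℝ := fun t =>
    f (x₀ + t • v) - t * ⟪f' x₀, v⟫_ℝ - L / (α + 1) * (t * ‖v‖) ^ (α + 1)
  have hφ : ∀ t, HasDerivAt φ (⟪f' (x₀ + t • v), v⟫_ℝ - ⟪f' x₀, v⟫_ℝ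
      - L / (α + 1) * (‖v‖ * (α + 1) * (t * ‖v‖) ^ α)) t := fun t => by
    have hpow := (hasDerivAt_mul_const ‖v‖).rpow_const (x := t) (Or.inr (le_add_of_nonneg_left hα))
    rw [add_sub_cancel_right] at hpow
    exact (((hdiff _).hasDerivAt_comp_add_smul).fun_sub (hasDerivAt_mul_const _)).fun_sub
      (hpow.const_mul (L / (α + 1)))
  have hanti : AntitoneOn φ (Ici 0) := by
    refine antitoneOn_of_hasDerivWithinAt_nonpos (convex_Ici 0)
      (fun t _ => (hφ t).continuousAt.continuousWithinAt) (fun t _ => (hφ t).hasDerivWithinAt) ?_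
    intro t ht
    rw [interior_Ici] at ht
    have hdist : ‖x₀ + t • v - x₀‖ = t * ‖v‖ := by
      rw [add_sub_cancel_left, norm_smul, Real.norm_of_nonneg ht.le]
    have hcs : ⟪f' (x₀ + t • v) - f' x₀, v⟫_ℝ ≤ L * (t * ‖v‖) ^ α * ‖v‖ :=
      calc ⟪f' (x₀ + t • v) - f' x₀, v⟫_ℝ ≤ ‖f' (x₀ + t • v) - f' x₀‖ * ‖v‖ :=
            real_inner_le_norm _ _
        _ ≤ L * (t * ‖v‖) ^ α * ‖v‖ := by
            gcongr
            rw [← hdist]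
            exact hHolder (x₀ + t • v) x₀
    have hcancel : L / (α + 1) * (‖v‖ * (α + 1) * (t * ‖v‖) ^ α) = L * (t * ‖v‖) ^ α * ‖v‖ := by
      field_simp
    rw [inner_sub_left] at hcs
    linarith
  have h01 : φ 1 ≤ φ 0 := hanti self_mem_Ici (mem_Ici.mpr zero_le_one) zero_le_one
  simp only [φ, v, one_smul, add_sub_cancel, one_mul, zero_smul, add_zero, zero_mul, sub_zero,
    Real.zero_rpow hα1, mul_zero] at h01
  linarith

theorem upper_envelope_bound_general
    (d : ℕ) (α Lα : ℝ) (hα : α ∈ Set.Icc (0:ℝ) 1)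
    (f : EuclideanSpace ℝ (Fin d) → ℝ)
    (f' : EuclideanSpace ℝ (Fin d) → EuclideanSpace ℝ (Fin d))
    (hdiff : ∀ x, HasGradientAt f (f' x) x)
    (hHolder : ∀ u v, ‖f' u - f' v‖ ≤ Lα * ‖u - v‖ ^ α)
    (η : ℝ) (y xstar : EuclideanSpace ℝ (Fin d))
    (hmin : ∀ x, f xstar + ‖xstar - y‖ ^ 2 / (2 * η) ≤ f x + ‖x - y‖ ^ 2 / (2 * η)) :
    ∀ x, f x + ‖x - y‖ ^ 2 / (2 * η) ≤
      (f xstar + ‖xstar - y‖ ^ 2 / (2 * η)) + ‖x - xstar‖ ^ 2 / (2 * η)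
        + Lα / (α + 1) * ‖x - xstar‖ ^ (α + 1) := by
  intro x
  have hopt : f' xstar = -(η⁻¹ • (xstar - y)) :=
    eq_neg_of_add_eq_zero_left <| IsLocalMin.hasGradientAt_eq_zero
      (f := fun z => f z + ‖z - y‖ ^ 2 / (2 * η)) (.of_forall hmin)
      ((hdiff xstar).add (hasGradientAt_norm_sub_sq_div_two_mul y xstar η))
  have hdesc := descent_lemma_of_holder_gradient hα.1 hdiff hHolder xstar x
  rw [hopt, inner_neg_left, real_inner_smul_left] at hdesc
  have hsplit : ‖x - y‖ ^ 2 / (2 * η) = ‖xstar - y‖ ^ 2 / (2 * η)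
      + η⁻¹ * ⟪xstar - y, x - xstar⟫_ℝ + ‖x - xstar‖ ^ 2 / (2 * η) := by
    rw [show x - y = (xstar - y) + (x - xstar) by abel, norm_add_sq_real]
    ring
  linarith

theorem upper_envelope_bound
    (d : ℕ) (α Lα : ℝ) (hα : α ∈ Set.Icc (0:ℝ) 1) (hL : 0 < Lα)
    (f : EuclideanSpace ℝ (Fin d) → ℝ) (hf : ConvexOn ℝ Set.univ f)
    (f' : EuclideanSpace ℝ (Fin d) → EuclideanSpace ℝ (Fin d))
    (hdiff : ∀ x, HasGradientAt f (f' x) x)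
    (hHolder : ∀ u v, ‖f' u - f' v‖ ≤ Lα * ‖u - v‖ ^ α)
    (η : ℝ) (hη : 0 < η) (y xstar : EuclideanSpace ℝ (Fin d))
    (hmin : ∀ x, f xstar + ‖xstar - y‖ ^ 2 / (2 * η) ≤ f x + ‖x - y‖ ^ 2 / (2 * η)) :
    ∀ x, f x + ‖x - y‖ ^ 2 / (2 * η) ≤
      (f xstar + ‖xstar - y‖ ^ 2 / (2 * η)) + ‖x - xstar‖ ^ 2 / (2 * η)
        + Lα / (α + 1) * ‖x - xstar‖ ^ (α + 1) :=
  upper_envelope_bound_general d α Lα hα f f' hdiff hHolder η y xstar hmin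
end
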